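/- Let (a,b) be a fictitious-play trajectory. Then for every T ≥ 5, Bob's total payoff satisfies T/2 − √(10T) ≤ Σ_{t=1}^T u_B^t ≤ T/2 + √(10T). -/

import Mathlib

open MeasureTheory

/-- Bob's choice of the left or right piece. -/
inductive Choice
  | L
  | R
deriving DecidableEq

/-- The cumulative valuation `V(x) = ∫_0^x v`. -/
noncomputable def cumul (v : ℝ → ℝ) (x : ℝ) : ℝ := ∫ y in (0:ℝ)..x, v y

/-- `v` is an integrable value density on `[0,1]`, bounded between `lo` and `hi`,
integrating to `1`. -/
def IsDensity (lo hi : ℝ) (v : ℝ → ℝ) : Prop :=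
  IntervalIntegrable v volume 0 1 ∧
  (∀ x ∈ Set.Icc (0:ℝ) 1, lo ≤ v x ∧ v x ≤ hi) ∧
  (∫ y in (0:ℝ)..1, v y) = 1

/-- Alice's round-`t` utility: if Bob picks `L` she gets `[a_t,1]`, else `[0,a_t]`. -/
noncomputable def uA (vA : ℝ → ℝ) (a : ℕ → ℝ) (b : ℕ → Choice) (t : ℕ) : ℝ :=
  if b t = Choice.L then 1 - cumul vA (a t) else cumul vA (a t)

/-- Bob's round-`t` utility: if he picks `L` he gets `[0,a_t]`, else `[a_t,1]`. -/
noncomputable def uB (vB : ℝ → ℝ) (a : ℕ → ℝ) (b : ℕ → Choice) (t : ℕ) : ℝ :=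
  if b t = Choice.L then cumul vB (a t) else 1 - cumul vB (a t)

/-- `α_t = r_t − ℓ_t`: number of `R` choices minus number of `L` choices up to round `t`. -/
noncomputable def alphaFP (b : ℕ → Choice) (t : ℕ) : ℝ :=
  ∑ i ∈ Finset.Icc 1 t, (if b i = Choice.R then (1:ℝ) else -1)

/-- `β_t = Σ_{i=1}^t (2 V_B(a_i) − 1)`. -/
noncomputable def betaFP (vB : ℝ → ℝ) (a : ℕ → ℝ) (t : ℕ) : ℝ :=
  ∑ i ∈ Finset.Icc 1 t, (2 * cumul vB (a i) - 1)

/-- The radius `ρ_t = |α_t| + |β_t|`. -/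
noncomputable def rhoFP (vB : ℝ → ℝ) (a : ℕ → ℝ) (b : ℕ → Choice) (t : ℕ) : ℝ :=
  |alphaFP b t| + |betaFP vB a t|

/-- `(a,b)` is a fictitious-play trajectory. -/
def IsFictitiousPlay (vB : ℝ → ℝ) (a : ℕ → ℝ) (b : ℕ → Choice) : Prop :=
  ∀ t : ℕ,
    (0 < alphaFP b t → a (t+1) = 1) ∧
    (alphaFP b t < 0 → a (t+1) = 0) ∧
    (0 < betaFP vB a t → b (t+1) = Choice.L) ∧
    (betaFP vB a t < 0 → b (t+1) = Choice.R)

/-- Round `t` is axis-crossing. -/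
def AxisCrossing (vB : ℝ → ℝ) (a : ℕ → ℝ) (b : ℕ → Choice) (t : ℕ) : Prop :=
  alphaFP b t = 0 ∨
  (betaFP vB a t ≤ 0 ∧ 0 < betaFP vB a (t+1)) ∨
  (0 ≤ betaFP vB a t ∧ betaFP vB a (t+1) < 0)

/-!
Write `A = α`, `B = β`. Each round, `2 u_B − 1 = −ΔA·ΔB`, and `|A_t| − |A_{t+1}| ≤ −ΔA·ΔB ≤
|B_{t+1}| − |B_t|`, so `2 Σ u_B − T` is trapped between `−|A_T|` and `|B_T|` and it suffices to show
`ρ_T² ≤ 40 T`. The pair `(A, B)` rotates around the origin: inside a quadrant the radius `|A| + |B|`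
is constant, and it grows by at most `2` at a zero of `A` and by `2` more when `B` changes sign.
Between two consecutive sign changes `s' < s` of `B`, `A` moves monotonically from about `0` to
`A_s`, so `ρ_{s+1} ≤ (s − s') + 2`; together with `ρ_{s+1} ≤ ρ_{s'+1} + 4` this gives
`ρ_{s+1}² ≤ 24 (s + 1)` by induction over the sign changes.
-/

open Finset

lemma Nat.exists_last_lt {P : ℕ → Prop} {n : ℕ} (h : ∃ m < n, P m) :
    ∃ m < n, P m ∧ ∀ k, m < k → k < n → ¬P k := by
  classical
  obtain ⟨m, hm, hmax⟩ := ((range n).filter P).exists_max_image id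
    (by obtain ⟨m, hm, hP⟩ := h; exact ⟨m, by simp [hm, hP]⟩)
  simp only [mem_filter, mem_range, id] at hm hmax
  exact ⟨m, hm.1, hm.2, fun k hmk hkn hk => absurd (hmax k ⟨hkn, hk⟩) (by omega)⟩

structure FPDynamics (A B : ℕ → ℝ) : Prop where
  A_zero : A 0 = 0
  B_zero : B 0 = 0
  A_succ : ∀ t, A (t + 1) = A t + 1 ∨ A (t + 1) = A t - 1
  abs_B_succ_sub_le : ∀ t, |B (t + 1) - B t| ≤ 1
  B_succ_of_A_pos : ∀ t, 0 < A t → B (t + 1) = B t + 1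
  B_succ_of_A_neg : ∀ t, A t < 0 → B (t + 1) = B t - 1
  A_succ_of_B_pos : ∀ t, 0 < B t → A (t + 1) = A t - 1
  A_succ_of_B_neg : ∀ t, B t < 0 → A (t + 1) = A t + 1

def rad (A B : ℕ → ℝ) (t : ℕ) : ℝ := |A t| + |B t|

def IsSignChange (B : ℕ → ℝ) (t : ℕ) : Prop := B t * B (t + 1) ≤ 0 ∧ B (t + 1) ≠ 0

lemma rad_nonneg (A B : ℕ → ℝ) (t : ℕ) : 0 ≤ rad A B t :=
  add_nonneg (abs_nonneg _) (abs_nonneg _)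

@[simp]
lemma rad_neg (A B : ℕ → ℝ) (t : ℕ) : rad (-A) (-B) t = rad A B t := by
  simp [rad]

@[simp]
lemma isSignChange_neg (B : ℕ → ℝ) (t : ℕ) : IsSignChange (-B) t ↔ IsSignChange B t := by
  simp [IsSignChange]

namespace FPDynamics

variable {A B : ℕ → ℝ}

lemma neg (h : FPDynamics A B) : FPDynamics (-A) (-B) where
  A_zero := by simp [h.A_zero]
  B_zero := by simp [h.B_zero]
  A_succ t := by
    rcases h.A_succ t with h' | h' <;> simp only [Pi.neg_apply, h'] <;> [right; left] <;> ring
  abs_B_succ_sub_le t := by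
    simpa [← abs_neg (B (t + 1) - B t), neg_add_eq_sub] using h.abs_B_succ_sub_le t
  B_succ_of_A_pos t hA := by
    simp only [Pi.neg_apply] at hA ⊢; rw [h.B_succ_of_A_neg t (by linarith)]; ring
  B_succ_of_A_neg t hA := by
    simp only [Pi.neg_apply] at hA ⊢; rw [h.B_succ_of_A_pos t (by linarith)]; ring
  A_succ_of_B_pos t hB := by
    simp only [Pi.neg_apply] at hB ⊢; rw [h.A_succ_of_B_neg t (by linarith)]; ring
  A_succ_of_B_neg t hB := by
    simp only [Pi.neg_apply] at hB ⊢; rw [h.A_succ_of_B_pos t (by linarith)]; ring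

lemma exists_int (h : FPDynamics A B) (t : ℕ) : ∃ k : ℤ, A t = k := by
  induction t with
  | zero => exact ⟨0, by simp [h.A_zero]⟩
  | succ t ih =>
    obtain ⟨k, hk⟩ := ih
    rcases h.A_succ t with h' | h'
    · exact ⟨k + 1, by push_cast; linarith⟩
    · exact ⟨k - 1, by push_cast; linarith⟩

lemma one_le_A_of_pos (h : FPDynamics A B) {t : ℕ} (hA : 0 < A t) : 1 ≤ A t := by
  obtain ⟨k, hk⟩ := h.exists_int t
  rw [hk] at hA ⊢
  exact_mod_cast Int.cast_pos.mp hA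

lemma abs_A_succ_le (h : FPDynamics A B) (t : ℕ) : |A (t + 1)| ≤ |A t| + 1 := by
  rcases h.A_succ t with h' | h' <;> rw [h']
  · exact (abs_add_le _ _).trans (by simp)
  · exact (abs_sub _ _).trans (by simp)

lemma abs_A_le_add (h : FPDynamics A B) {k u : ℕ} (hku : k ≤ u) :
    |A u| ≤ |A k| + ((u : ℝ) - k) := by
  induction u, hku using Nat.le_induction with
  | base => simp
  | succ u _ ih => push_cast; linarith [h.abs_A_succ_le u]

lemma rad_succ_le (h : FPDynamics A B) (t : ℕ) : rad A B (t + 1) ≤ rad A B t + 2 := by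
  have hB : |B (t + 1)| ≤ |B t| + 1 := by
    have := abs_add_le (B (t + 1) - B t) (B t)
    rw [sub_add_cancel] at this
    linarith [h.abs_B_succ_sub_le t]
  unfold rad
  linarith [h.abs_A_succ_le t]

lemma rad_succ_eq (h : FPDynamics A B) {t : ℕ} (hB : 0 < B t) (hB' : 0 ≤ B (t + 1))
    (hA : A t ≠ 0) : rad A B (t + 1) = rad A B t := by
  have hA' := h.A_succ_of_B_pos t hB
  unfold rad
  rw [abs_of_pos hB, abs_of_nonneg hB', hA']
  rcases hA.lt_or_gt with hA | hA
  · rw [abs_of_neg hA, abs_of_neg (by linarith), h.B_succ_of_A_neg t hA]; ring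
  · have := h.one_le_A_of_pos hA
    rw [abs_of_pos hA, abs_of_nonneg (by linarith), h.B_succ_of_A_pos t hA]; ring

lemma rad_succ_le_one (h : FPDynamics A B) {t : ℕ} (hB : B t = 0) (hB' : B (t + 1) = 0) :
    rad A B (t + 1) ≤ 1 := by
  have hA : A t = 0 := by
    by_contra hA
    rcases (Ne.lt_or_gt hA) with hA | hA
    · linarith [h.B_succ_of_A_neg t hA]
    · linarith [h.B_succ_of_A_pos t hA]
  have := h.abs_A_succ_le t
  simp only [rad, hB', hA, abs_zero] at this ⊢
  linarith

lemma A_eq_sub_of_pos (h : FPDynamics A B) {p k : ℕ} (hpk : p ≤ k)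
    (hB : ∀ w, p ≤ w → w < k → 0 < B w) : A k = A p - ((k : ℝ) - p) := by
  induction k, hpk using Nat.le_induction with
  | base => simp
  | succ k hpk ih =>
    rw [h.A_succ_of_B_pos k (hB k hpk (by omega)), ih fun w hw hwk => hB w hw (by omega)]
    push_cast; ring

/-- While `B > 0`, `A` decreases strictly, so the radius can grow only at the one step where
`A = 0`; once `B` vanishes it stays `0`, which forces `rad ≤ 1`. -/
lemma rad_le_of_nonneg_of_forall_not_isSignChange (h : FPDynamics A B) {p q : ℕ} (hBp : 0 ≤ B p)
    (hq : ∀ w, p ≤ w → w < q → ¬IsSignChange B w) {u : ℕ} (hpu : p ≤ u) (huq : u ≤ q) :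
    rad A B u ≤ rad A B p + 2 := by
  suffices ∀ u, p ≤ u → u ≤ q → 0 ≤ B u ∧ rad A B u ≤ rad A B p + 2 ∧
      (0 ≤ A u → 0 < B u → rad A B u ≤ rad A B p) from (this u hpu huq).2.1
  intro u hpu
  induction u, hpu using Nat.le_induction with
  | base => exact fun _ => ⟨hBp, by linarith [rad_nonneg A B p], fun _ _ => le_rfl⟩
  | succ w hpw ih =>
    intro hwq
    obtain ⟨hB, hrad, hrad'⟩ := ih (by omega)
    have hnc := hq w hpw (by omega)
    have hB' : 0 ≤ B (w + 1) := by
      by_contra hneg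
      exact hnc ⟨mul_nonpos_of_nonneg_of_nonpos hB (by linarith), by linarith⟩
    rcases hB.eq_or_lt with hB0 | hBpos
    · have hB0' : B (w + 1) = 0 := by
        by_contra hne
        exact hnc ⟨by simp [← hB0], hne⟩
      refine ⟨hB', ?_, fun _ hpos => absurd hB0' hpos.ne'⟩
      linarith [h.rad_succ_le_one hB0.symm hB0', rad_nonneg A B p]
    · have hA' := h.A_succ_of_B_pos w hBpos
      by_cases hA : A w = 0
      · refine ⟨hB', ?_, fun hA1 _ => by linarith⟩
        linarith [h.rad_succ_le w, hrad' hA.ge hBpos]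
      · rw [h.rad_succ_eq hBpos hB' hA]
        exact ⟨hB', hrad, fun hA1 _ => hrad' (by linarith) hBpos⟩

lemma rad_le_of_forall_not_isSignChange (h : FPDynamics A B) {p q : ℕ}
    (hq : ∀ w, p ≤ w → w < q → ¬IsSignChange B w) {u : ℕ} (hpu : p ≤ u) (huq : u ≤ q) :
    rad A B u ≤ rad A B p + 2 := by
  rcases le_total 0 (B p) with hBp | hBp
  · exact h.rad_le_of_nonneg_of_forall_not_isSignChange hBp hq hpu huq
  · simpa using h.neg.rad_le_of_nonneg_of_forall_not_isSignChange (by simpa using hBp)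
      (by simpa using hq) hpu huq

lemma abs_B_succ_le_one (h : FPDynamics A B) {t : ℕ} (ht : B t * B (t + 1) ≤ 0) :
    |B (t + 1)| ≤ 1 := by
  have : |B (t + 1)| ≤ |B (t + 1) - B t| := sq_le_sq.mp (by nlinarith)
  linarith [h.abs_B_succ_sub_le t]

lemma neg_one_le_A_succ (h : FPDynamics A B) {t : ℕ} (ht : IsSignChange B t)
    (hB : 0 < B (t + 1)) : -1 ≤ A (t + 1) := by
  have hBt : B t ≤ 0 := by nlinarith [ht.1]
  have hA : 0 ≤ A t := by
    by_contra hA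
    linarith [h.B_succ_of_A_neg t (by linarith)]
  rcases h.A_succ t with h' | h' <;> linarith

/-- Starting from `B p > 0` and `A p ≥ -1`, `A` decreases by `1` per step until `B` first
becomes `≤ 0`, which forces `A ≤ 0` just before; afterwards `A` is `1`-Lipschitz. -/
lemma abs_A_succ_le_of_pos (h : FPDynamics A B) {p s : ℕ} (hps : p ≤ s) (hBp : 0 < B p)
    (hAp : -1 ≤ A p) (hs : B s * B (s + 1) ≤ 0) : |A (s + 1)| ≤ (s : ℝ) - p + 2 := by
  classical
  have hex : ∃ m, p < m ∧ m ≤ s + 1 ∧ B m ≤ 0 := by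
    by_cases hBs : B s ≤ 0
    · exact ⟨s, lt_of_le_of_ne hps (by rintro rfl; linarith), by omega, hBs⟩
    · exact ⟨s + 1, by omega, le_rfl, nonpos_of_mul_nonpos_right hs (not_le.mp hBs)⟩
  obtain ⟨hpm, hms, hBm⟩ := Nat.find_spec hex
  obtain ⟨k, hk⟩ : ∃ k, Nat.find hex = k + 1 := ⟨Nat.find hex - 1, by omega⟩
  rw [hk] at hpm hms hBm
  have hBpos : ∀ w, p ≤ w → w < k + 1 → 0 < B w := by
    intro w hpw hwk
    rcases hpw.eq_or_lt with rfl | hpw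
    · exact hBp
    · exact not_le.mp fun hBw => Nat.find_min hex (by omega) ⟨hpw, by omega, hBw⟩
  have hAk := h.A_eq_sub_of_pos (by omega : p ≤ k) fun w hpw hwk => hBpos w hpw (by omega)
  have hAk0 : A k ≤ 0 := by
    by_contra hA
    linarith [h.B_succ_of_A_pos k (by linarith), hBpos k (by omega) (by omega)]
  have := h.abs_A_le_add (by omega : k ≤ s + 1)
  rw [abs_of_nonpos hAk0] at this
  push_cast at this
  linarith

lemma abs_A_succ_le_of_isSignChange (h : FPDynamics A B) {s' s : ℕ} (hs' : IsSignChange B s')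
    (hss : s' < s) (hs : IsSignChange B s) : |A (s + 1)| ≤ (s : ℝ) - s' + 1 := by
  have key : ∀ {A B : ℕ → ℝ}, FPDynamics A B → IsSignChange B s' → IsSignChange B s →
      0 < B (s' + 1) → |A (s + 1)| ≤ (s : ℝ) - s' + 1 := fun h hs' hs hB => by
    have := h.abs_A_succ_le_of_pos (by omega) hB (h.neg_one_le_A_succ hs' hB) hs.1
    push_cast at this
    linarith
  rcases hs'.2.lt_or_gt with hB | hB
  · simpa using key h.neg (by simpa using hs') (by simpa using hs) (by simpa using hB)
  · exact key h hs' hs hB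

lemma rad_succ_le_of_isSignChange (h : FPDynamics A B) {s' s : ℕ} (hs' : IsSignChange B s')
    (hss : s' < s) (hs : IsSignChange B s) : rad A B (s + 1) ≤ (s : ℝ) - s' + 2 := by
  have := h.abs_A_succ_le_of_isSignChange hs' hss hs
  have := h.abs_B_succ_le_one hs.1
  unfold rad
  linarith

lemma sq_le_of_le_add_four_of_le_add_two {R r X g : ℝ} (hR : 0 ≤ R) (hr : 0 ≤ r) (hg : 1 ≤ g)
    (hrX : r ^ 2 ≤ X) (h₁ : R ≤ r + 4) (h₂ : R ≤ g + 2) : R ^ 2 ≤ X + 24 * g := by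
  rcases le_total r (3 * g - 2) with hrg | hrg
  · nlinarith
  · nlinarith

lemma rad_succ_sq_le (h : FPDynamics A B) {s : ℕ} (hs : IsSignChange B s) :
    rad A B (s + 1) ^ 2 ≤ 24 * ((s : ℝ) + 1) := by
  induction s using Nat.strong_induction_on with
  | _ s ih =>
    by_cases hprev : ∃ s' < s, IsSignChange B s'
    · obtain ⟨s', hss, hs', hlast⟩ := Nat.exists_last_lt hprev
      have h₁ : rad A B (s + 1) ≤ rad A B (s' + 1) + 4 := by
        have := h.rad_le_of_forall_not_isSignChange (p := s' + 1) (q := s)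
          (fun w hw hws => hlast w (by omega) hws) (by omega) le_rfl
        linarith [h.rad_succ_le s]
      have hg : (1 : ℝ) ≤ (s : ℝ) - s' := by
        have : ((s' + 1 : ℕ) : ℝ) ≤ s := by exact_mod_cast hss
        push_cast at this
        linarith
      have := sq_le_of_le_add_four_of_le_add_two (rad_nonneg A B _) (rad_nonneg A B _) hg
        (ih s' hss hs') h₁ (h.rad_succ_le_of_isSignChange hs' hss hs)
      linarith
    · push Not at hprev
      have := h.rad_le_of_forall_not_isSignChange (p := 0) (q := s)
        (fun w _ hws => hprev w hws) (Nat.zero_le s) le_rfl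
      have h₀ : rad A B 0 = 0 := by simp [rad, h.A_zero, h.B_zero]
      have : rad A B (s + 1) ≤ 4 := by linarith [h.rad_succ_le s]
      nlinarith [rad_nonneg A B (s + 1), (Nat.cast_nonneg s : (0 : ℝ) ≤ s)]

lemma rad_sq_le (h : FPDynamics A B) {T : ℕ} (hT : 2 ≤ T) : rad A B T ^ 2 ≤ 40 * T := by
  have hT' : (2 : ℝ) ≤ T := by exact_mod_cast hT
  by_cases hprev : ∃ s < T, IsSignChange B s
  · obtain ⟨s, hsT, hs, hlast⟩ := Nat.exists_last_lt hprev
    have h₁ : rad A B T ≤ rad A B (s + 1) + 2 :=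
      h.rad_le_of_forall_not_isSignChange (fun w hw hwT => hlast w (by omega) hwT) (by omega) le_rfl
    have h₂ : rad A B (s + 1) ^ 2 ≤ 24 * T := by
      have : (s : ℝ) + 1 ≤ T := by exact_mod_cast hsT
      linarith [h.rad_succ_sq_le hs]
    have h₃ : rad A B (s + 1) ≤ 4 * T - 1 :=
      (pow_le_pow_iff_left₀ (rad_nonneg A B _) (by linarith) two_ne_zero).mp (by nlinarith)
    nlinarith [rad_nonneg A B (s + 1), rad_nonneg A B T]
  · push Not at hprev
    have := h.rad_le_of_forall_not_isSignChange (p := 0) (q := T)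
      (fun w _ hwT => hprev w hwT) (Nat.zero_le T) le_rfl
    have h₀ : rad A B 0 = 0 := by simp [rad, h.A_zero, h.B_zero]
    nlinarith [rad_nonneg A B T]

lemma abs_A_sub_abs_A_succ_le (h : FPDynamics A B) (t : ℕ) :
    |A t| - |A (t + 1)| ≤ -((A (t + 1) - A t) * (B (t + 1) - B t)) := by
  rcases lt_trichotomy (A t) 0 with hA | hA | hA
  · have hΔ : B (t + 1) - B t = -1 := by rw [h.B_succ_of_A_neg t hA]; ring
    rw [hΔ, abs_of_neg hA]
    linarith [neg_abs_le (A (t + 1))]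
  · have := abs_le.mp (h.abs_B_succ_sub_le t)
    rcases h.A_succ t with h' | h' <;> rw [h', hA] <;> norm_num <;> linarith
  · have hΔ : B (t + 1) - B t = 1 := by rw [h.B_succ_of_A_pos t hA]; ring
    rw [hΔ, abs_of_pos hA]
    linarith [le_abs_self (A (t + 1))]

lemma neg_mul_le_abs_B_succ_sub_abs_B (h : FPDynamics A B) (t : ℕ) :
    -((A (t + 1) - A t) * (B (t + 1) - B t)) ≤ |B (t + 1)| - |B t| := by
  rcases lt_trichotomy (B t) 0 with hB | hB | hB
  · have hΔ : A (t + 1) - A t = 1 := by rw [h.A_succ_of_B_neg t hB]; ring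
    rw [hΔ, abs_of_neg hB]
    linarith [neg_abs_le (B (t + 1))]
  · rcases h.A_succ t with h' | h' <;> rw [h', hB] <;> norm_num <;>
      linarith [neg_abs_le (B (t + 1)), le_abs_self (B (t + 1))]
  · have hΔ : A (t + 1) - A t = -1 := by rw [h.A_succ_of_B_pos t hB]; ring
    rw [hΔ, abs_of_pos hB]
    linarith [le_abs_self (B (t + 1))]

lemma abs_sum_mul_le_rad (h : FPDynamics A B) (T : ℕ) :
    |∑ t ∈ range T, (A (t + 1) - A t) * (B (t + 1) - B t)| ≤ rad A B T := by
  have hA := sum_le_sum fun t (_ : t ∈ range T) => h.abs_A_sub_abs_A_succ_le t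
  have hB := sum_le_sum fun t (_ : t ∈ range T) => h.neg_mul_le_abs_B_succ_sub_abs_B t
  rw [sum_range_sub (fun t => |B t|)] at hB
  rw [sum_range_sub' (fun t => |A t|)] at hA
  simp only [sum_neg_distrib, h.A_zero, h.B_zero, abs_zero, sub_zero, zero_sub] at hA hB
  rw [abs_le]
  constructor <;> linarith [abs_nonneg (A T), abs_nonneg (B T), show rad A B T = |A T| + |B T| from rfl]

end FPDynamics

lemma cumul_mem_Icc {lo hi : ℝ} {v : ℝ → ℝ} (hv : IsDensity lo hi v) (hlo : 0 ≤ lo) {x : ℝ}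
    (hx : x ∈ Set.Icc (0 : ℝ) 1) : cumul v x ∈ Set.Icc (0 : ℝ) 1 := by
  obtain ⟨hint, hbd, hone⟩ := hv
  have hpos : ∀ y ∈ Set.Icc (0 : ℝ) 1, 0 ≤ v y := fun y hy => hlo.trans (hbd y hy).1
  have hint' : IntervalIntegrable v volume 0 x :=
    hint.mono_set (Set.uIcc_subset_uIcc (by simp) (by simpa [Set.uIcc_of_le] using hx))
  have hsplit := intervalIntegral.integral_interval_sub_left hint hint'
  have hrest : 0 ≤ ∫ y in x..1, v y :=
    intervalIntegral.integral_nonneg hx.2 fun y hy => hpos y ⟨hx.1.trans hy.1, hy.2⟩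
  refine ⟨intervalIntegral.integral_nonneg hx.1 fun y hy => hpos y ⟨hy.1, hy.2.trans hx.2⟩, ?_⟩
  unfold cumul
  linarith

lemma alphaFP_succ (b : ℕ → Choice) (t : ℕ) :
    alphaFP b (t + 1) = alphaFP b t + if b (t + 1) = Choice.R then 1 else -1 :=
  sum_Icc_succ_top (by omega) _

lemma betaFP_succ (vB : ℝ → ℝ) (a : ℕ → ℝ) (t : ℕ) :
    betaFP vB a (t + 1) = betaFP vB a t + (2 * cumul vB (a (t + 1)) - 1) :=
  sum_Icc_succ_top (by omega) _

lemma two_mul_uB_sub_one (vB : ℝ → ℝ) (a : ℕ → ℝ) (b : ℕ → Choice) (t : ℕ) :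
    2 * uB vB a b (t + 1) - 1 =
      -((alphaFP b (t + 1) - alphaFP b t) * (betaFP vB a (t + 1) - betaFP vB a t)) := by
  rw [alphaFP_succ, betaFP_succ, uB]
  cases b (t + 1) <;> simp only [reduceCtorEq, if_true, if_false] <;> ring

lemma IsFictitiousPlay.fpDynamics {lo hi : ℝ} {vB : ℝ → ℝ} {a : ℕ → ℝ} {b : ℕ → Choice}
    (hfp : IsFictitiousPlay vB a b) (hv : IsDensity lo hi vB) (hlo : 0 ≤ lo)
    (ha : ∀ t : ℕ, 1 ≤ t → a t ∈ Set.Icc (0 : ℝ) 1) :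
    FPDynamics (alphaFP b) (betaFP vB a) where
  A_zero := by simp [alphaFP]
  B_zero := by simp [betaFP]
  A_succ t := by
    rw [alphaFP_succ]
    split_ifs
    · left; rfl
    · right; ring
  abs_B_succ_sub_le t := by
    have := cumul_mem_Icc hv hlo (ha (t + 1) (by omega))
    rw [betaFP_succ, add_sub_cancel_left, abs_le]
    constructor <;> linarith [this.1, this.2]
  B_succ_of_A_pos t hA := by
    rw [betaFP_succ, (hfp t).1 hA, cumul, hv.2.2]; ring
  B_succ_of_A_neg t hA := by
    rw [betaFP_succ, (hfp t).2.1 hA, cumul, intervalIntegral.integral_same]; ring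
  A_succ_of_B_pos t hB := by
    rw [alphaFP_succ, (hfp t).2.2.1 hB]; simp; ring
  A_succ_of_B_neg t hB := by
    rw [alphaFP_succ, (hfp t).2.2.2 hB]; simp

theorem bob_total_payoff_bounds_general
    (δ Δ : ℝ) (hδ : 0 < δ)
    (vB : ℝ → ℝ) (hB : IsDensity δ Δ vB)
    (a : ℕ → ℝ) (b : ℕ → Choice)
    (ha : ∀ t : ℕ, 1 ≤ t → a t ∈ Set.Icc (0:ℝ) 1)
    (hfp : IsFictitiousPlay vB a b)
    (T : ℕ) (hT : 5 ≤ T) :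
    (T : ℝ) / 2 - Real.sqrt (10 * T) ≤ ∑ t ∈ Finset.Icc 1 T, uB vB a b t ∧
    ∑ t ∈ Finset.Icc 1 T, uB vB a b t ≤ (T : ℝ) / 2 + Real.sqrt (10 * T) := by
  have hD := hfp.fpDynamics hB hδ.le ha
  have hshift : ∑ t ∈ Icc 1 T, uB vB a b t = ∑ t ∈ range T, uB vB a b (t + 1) := by
    rw [range_eq_Ico, sum_Ico_add', zero_add, Finset.Ico_add_one_right_eq_Icc]
  have hsum : 2 * ∑ t ∈ Icc 1 T, uB vB a b t - T =
      -∑ t ∈ range T, (alphaFP b (t + 1) - alphaFP b t) * (betaFP vB a (t + 1) - betaFP vB a t) := by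
    rw [hshift, ← sum_neg_distrib]
    simp only [← two_mul_uB_sub_one, sum_sub_distrib, ← mul_sum, sum_const, card_range,
      nsmul_eq_mul, mul_one]
  have hrad : rad (alphaFP b) (betaFP vB a) T ≤ 2 * Real.sqrt (10 * T) := by
    rw [← pow_le_pow_iff_left₀ (rad_nonneg _ _ _) (by positivity) two_ne_zero, mul_pow,
      Real.sq_sqrt (by positivity)]
    linarith [hD.rad_sq_le (by omega : 2 ≤ T)]
  have := abs_le.mp ((hD.abs_sum_mul_le_rad T).trans hrad)
  constructor <;> linarith

/-- Under fictitious play, for `T ≥ 5` Bob's total payoff satisfies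
`T/2 − √(10T) ≤ Σ u_B^t ≤ T/2 + √(10T)`. -/
theorem bob_total_payoff_bounds
    (δ Δ : ℝ) (hδ : 0 < δ) (hδΔ : δ ≤ Δ)
    (vA vB : ℝ → ℝ) (hA : IsDensity δ Δ vA) (hB : IsDensity δ Δ vB)
    (a : ℕ → ℝ) (b : ℕ → Choice)
    (ha : ∀ t : ℕ, 1 ≤ t → a t ∈ Set.Icc (0:ℝ) 1)
    (hfp : IsFictitiousPlay vB a b)
    (T : ℕ) (hT : 5 ≤ T) :
    (T : ℝ) / 2 - Real.sqrt (10 * T) ≤ ∑ t ∈ Finset.Icc 1 T, uB vB a b t ∧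
    ∑ t ∈ Finset.Icc 1 T, uB vB a b t ≤ (T : ℝ) / 2 + Real.sqrt (10 * T) :=
  bob_total_payoff_bounds_general δ Δ hδ vB hB a b ha hfp T hT
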